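/- Let 𝔽_q be a finite field with q elements and let n ≥ 2. Then the expected number of linear factors of a uniformly random monic squarefree polynomial of degree n over 𝔽_q equals the alternating sum 1 − 1/q + 1/q^2 − ⋯ ± 1/q^{n−2}; that is, ∑_{f ∈ Z_n(𝔽_q)} d_1(f) = (q^n − q^{n−1}) · ∑_{i=0}^{n−2} (−1)^i q^{−i}. -/
import Mathlib


/-- The set of monic squarefree polynomials of degree `n` over `F`. -/
def monicSquarefree (F : Type) [Field F] (n : ℕ) : Set (Polynomial F) :=
  {f : Polynomial F | f.Monic ∧ Squarefree f ∧ f.natDegree = n}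

/-- `d_i(f)`: the number of monic irreducible polynomials of degree `i` dividing `f`. -/
noncomputable def dcount {F : Type} [Field F] (f : Polynomial F) (i : ℕ) : ℕ :=
  {p : Polynomial F | p.Monic ∧ Irreducible p ∧ p.natDegree = i ∧ p ∣ f}.ncard

namespace SFAux

open Polynomial

variable {F : Type} [Field F]

/-- Monic polynomials of degree `m`. -/
def Mset (F : Type) [Field F] (m : ℕ) : Set (Polynomial F) :=
  {f : Polynomial F | f.Monic ∧ f.natDegree = m}

noncomputable def Mequiv [Fintype F] (m : ℕ) : ↥(Mset F m) ≃ (Fin m → F) :=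
  ((Equiv.subtypeEquivRight fun _ => Iff.rfl).trans
    (Polynomial.monicEquivDegreeLT m)).trans (Polynomial.degreeLTEquiv F m).toEquiv

lemma finite_M [Fintype F] (m : ℕ) : (Mset F m).Finite := by
  rw [← Set.finite_coe_iff]
  exact Finite.of_equiv _ (Mequiv m).symm

lemma ncard_M [Fintype F] (m : ℕ) : (Mset F m).ncard = Fintype.card F ^ m := by
  rw [← Nat.card_coe_set_eq, Nat.card_congr (Mequiv m), Nat.card_eq_fintype_card,
    Fintype.card_fun, Fintype.card_fin]

lemma S_subset_M (m : ℕ) : monicSquarefree F m ⊆ Mset F m := fun f hf => ⟨hf.1, hf.2.2⟩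

lemma finite_S [Fintype F] (m : ℕ) : (monicSquarefree F m).Finite :=
  (finite_M m).subset (S_subset_M m)

lemma exists_decomp_aux (n : ℕ) : ∀ f : F[X], f.Monic → f.natDegree = n →
    ∃ g h : F[X], g.Monic ∧ Squarefree g ∧ h.Monic ∧ f = g * h ^ 2 := by
  induction n using Nat.strong_induction_on with
  | _ n ih =>
    intro f hf hd
    by_cases hsf : Squarefree f
    · exact ⟨f, 1, hf, hsf, monic_one, by ring⟩
    · rw [Squarefree] at hsf; push_neg at hsf
      obtain ⟨p, hpdvd, hpu⟩ := hsf
      have hf0 : f ≠ 0 := hf.ne_zero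
      have hp0 : p ≠ 0 := by
        rintro rfl
        exact hf0 (eq_zero_of_zero_dvd (by simpa using hpdvd))
      set c := p.leadingCoeff with hc
      have hc0 : c ≠ 0 := leadingCoeff_ne_zero.mpr hp0
      set p' := p * C c⁻¹ with hp'
      have hp'm : p'.Monic := monic_mul_leadingCoeff_inv hp0
      have hup : p' * C c = p := by
        rw [hp', mul_assoc, ← C_mul, inv_mul_cancel₀ hc0, C_1, mul_one]
      have hdvd' : p' * p' ∣ f := by
        refine dvd_trans ⟨C c * C c, ?_⟩ hpdvd
        rw [← hup]; ring
      obtain ⟨f', hf'⟩ := hdvd'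
      have hf'm : f'.Monic := (hp'm.mul hp'm).of_mul_monic_left (hf' ▸ hf)
      have hp'deg : 1 ≤ p'.natDegree := by
        by_contra hdeg
        have : p'.natDegree = 0 := by omega
        have : p' = 1 := hp'm.natDegree_eq_zero.mp this
        exact hpu (by rw [← hup, this, one_mul]; exact isUnit_C.mpr hc0.isUnit)
      have hdeg : f'.natDegree < n := by
        have h1 : f.natDegree = (p' * p').natDegree + f'.natDegree := by
          rw [hf']
          exact (hp'm.mul hp'm).natDegree_mul hf'm
        have h2 : (p' * p').natDegree = p'.natDegree + p'.natDegree :=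
          hp'm.natDegree_mul hp'm
        omega
      obtain ⟨g, h, hg, hs, hh, heq⟩ := ih f'.natDegree hdeg f' hf'm rfl
      exact ⟨g, p' * h, hg, hs, hp'm.mul hh, by rw [hf', heq]; ring⟩

/-- Existence of the squarefree decomposition. -/
lemma exists_decomp (f : F[X]) (hf : f.Monic) :
    ∃ g h : F[X], g.Monic ∧ Squarefree g ∧ h.Monic ∧ f = g * h ^ 2 :=
  exists_decomp_aux f.natDegree f hf rfl

open UniqueFactorizationMonoid in
/-- Uniqueness of the squarefree decomposition. -/
lemma decomp_unique {g₁ h₁ g₂ h₂ : F[X]} (hg₁ : g₁.Monic) (hs₁ : Squarefree g₁)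
    (hh₁ : h₁.Monic) (hg₂ : g₂.Monic) (hs₂ : Squarefree g₂) (hh₂ : h₂.Monic)
    (heq : g₁ * h₁ ^ 2 = g₂ * h₂ ^ 2) : g₁ = g₂ ∧ h₁ = h₂ := by
  classical
  have hg₁0 : g₁ ≠ 0 := hg₁.ne_zero
  have hg₂0 : g₂ ≠ 0 := hg₂.ne_zero
  have hh₁0 : h₁ ≠ 0 := hh₁.ne_zero
  have hh₂0 : h₂ ≠ 0 := hh₂.ne_zero
  have key : normalizedFactors g₁ + 2 • normalizedFactors h₁ =
      normalizedFactors g₂ + 2 • normalizedFactors h₂ := by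
    have := congrArg normalizedFactors heq
    rwa [normalizedFactors_mul hg₁0 (pow_ne_zero 2 hh₁0),
      normalizedFactors_mul hg₂0 (pow_ne_zero 2 hh₂0),
      normalizedFactors_pow, normalizedFactors_pow] at this
  have hnd₁ : (normalizedFactors g₁).Nodup :=
    (squarefree_iff_nodup_normalizedFactors hg₁0).mp hs₁
  have hnd₂ : (normalizedFactors g₂).Nodup :=
    (squarefree_iff_nodup_normalizedFactors hg₂0).mp hs₂
  have hcount : ∀ p : F[X],
      (normalizedFactors g₁).count p = (normalizedFactors g₂).count p ∧
      (normalizedFactors h₁).count p = (normalizedFactors h₂).count p := by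
    intro p
    have h1 := Multiset.nodup_iff_count_le_one.mp hnd₁ p
    have h2 := Multiset.nodup_iff_count_le_one.mp hnd₂ p
    have h3 := congrArg (Multiset.count p) key
    rw [Multiset.count_add, Multiset.count_add, Multiset.count_nsmul,
      Multiset.count_nsmul] at h3
    omega
  have hgf : normalizedFactors g₁ = normalizedFactors g₂ :=
    Multiset.ext.mpr fun p => (hcount p).1
  have hhf : normalizedFactors h₁ = normalizedFactors h₂ :=
    Multiset.ext.mpr fun p => (hcount p).2
  constructor
  · exact Polynomial.eq_of_monic_of_associated hg₁ hg₂
      ((associated_iff_normalizedFactors_eq_normalizedFactors hg₁0 hg₂0).mpr hgf)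
  · exact Polynomial.eq_of_monic_of_associated hh₁ hh₂
      ((associated_iff_normalizedFactors_eq_normalizedFactors hh₁0 hh₂0).mpr hhf)

/-- The fundamental counting identity. -/
lemma mul_sq_mem {j m : ℕ} (hj : 2 * j ≤ m) {g h : F[X]}
    (hg : g ∈ monicSquarefree F (m - 2 * j)) (hh : h ∈ Mset F j) :
    g * h ^ 2 ∈ Mset F m := by
  refine ⟨hg.1.mul (hh.1.pow 2), ?_⟩
  rw [hg.1.natDegree_mul (hh.1.pow 2), hg.2.2, hh.1.natDegree_pow 2, hh.2]
  omega

lemma M_card_eq_sum [Fintype F] (m : ℕ) :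
    (Mset F m).ncard =
      ∑ j ∈ Finset.range (m / 2 + 1),
        (monicSquarefree F (m - 2 * j)).ncard * Fintype.card F ^ j := by
  classical
  letI : ∀ k, Fintype ↥(monicSquarefree F k) := fun k => (finite_S k).fintype
  letI : ∀ k, Fintype ↥(Mset F k) := fun k => (finite_M k).fintype
  have hjle : ∀ j : Fin (m / 2 + 1), 2 * (j : ℕ) ≤ m := by
    intro j
    have := j.2
    have := Nat.div_mul_le_self m 2
    omega
  have hbij : Function.Bijective
      (fun x : Σ j : Fin (m / 2 + 1),
          ↥(monicSquarefree F (m - 2 * (j : ℕ))) × ↥(Mset F (j : ℕ)) =>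
        (⟨(x.2.1 : F[X]) * (x.2.2 : F[X]) ^ 2,
          mul_sq_mem (hjle x.1) x.2.1.2 x.2.2.2⟩ : ↥(Mset F m))) := by
    constructor
    · rintro ⟨j, g, h⟩ ⟨j', g', h'⟩ hψ
      have heq : (g : F[X]) * (h : F[X]) ^ 2 = (g' : F[X]) * (h' : F[X]) ^ 2 :=
        congrArg Subtype.val hψ
      obtain ⟨hgg, hhh⟩ := decomp_unique g.2.1 g.2.2.1 h.2.1 g'.2.1 g'.2.2.1 h'.2.1 heq
      have hjj : j = j' := by
        apply Fin.ext
        rw [← h.2.2, ← h'.2.2, hhh]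
      subst hjj
      obtain rfl : g = g' := Subtype.ext hgg
      obtain rfl : h = h' := Subtype.ext hhh
      rfl
    · rintro ⟨f, hfm, hfd⟩
      obtain ⟨g, h, hg, hs, hh, heq⟩ := exists_decomp f hfm
      have hdeg : g.natDegree + 2 * h.natDegree = m := by
        rw [← hfd, heq, hg.natDegree_mul (hh.pow 2), hh.natDegree_pow 2]
      have hj : h.natDegree < m / 2 + 1 := by omega
      refine ⟨⟨⟨h.natDegree, hj⟩, ⟨g, hg, hs, ?_⟩, ⟨h, hh, rfl⟩⟩, Subtype.ext heq.symm⟩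
      show g.natDegree = m - 2 * h.natDegree
      omega
  have hcardS : ∀ k, Fintype.card ↥(monicSquarefree F k) = (monicSquarefree F k).ncard := by
    intro k
    rw [← Nat.card_eq_fintype_card, Nat.card_coe_set_eq]
  have hcardM : ∀ k, Fintype.card ↥(Mset F k) = Fintype.card F ^ k := by
    intro k
    rw [← Nat.card_eq_fintype_card, Nat.card_coe_set_eq, ncard_M]
  have hmain := Fintype.card_congr (Equiv.ofBijective _ hbij)
  rw [Fintype.card_sigma] at hmain
  rw [← Nat.card_coe_set_eq, Nat.card_eq_fintype_card, ← hmain, Fin.sum_univ_eq_sum_range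
    (fun j => Fintype.card (↥(monicSquarefree F (m - 2 * j)) × ↥(Mset F j)))]
  exact Finset.sum_congr rfl fun j _ => by
    rw [Fintype.card_prod, hcardS, hcardM]

lemma S_zero_eq : monicSquarefree F 0 = {1} := by
  ext f
  constructor
  · rintro ⟨hm, _, hd⟩
    exact hm.natDegree_eq_zero.mp hd
  · rintro rfl
    exact ⟨monic_one, squarefree_one, natDegree_one⟩

lemma ncard_S_zero : (monicSquarefree F 0).ncard = 1 := by
  rw [S_zero_eq, Set.ncard_singleton]

lemma ncard_S_one [Fintype F] : (monicSquarefree F 1).ncard = Fintype.card F := by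
  have hSM : monicSquarefree F 1 = Mset F 1 := by
    ext f
    refine ⟨fun hf => ⟨hf.1, hf.2.2⟩, fun hf => ⟨hf.1, ?_, hf.2⟩⟩
    have hdeg : f.degree = (1 : ℕ) := (degree_eq_iff_natDegree_eq hf.1.ne_zero).mpr hf.2
    exact (irreducible_of_degree_eq_one (by exact_mod_cast hdeg)).squarefree
  rw [hSM, ncard_M, pow_one]

lemma ncard_S_add_eq [Fintype F] {m : ℕ} (hm : 2 ≤ m) :
    (monicSquarefree F m).ncard + Fintype.card F ^ (m - 1) = Fintype.card F ^ m := by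
  have h1 := M_card_eq_sum (F := F) m
  have h2 := M_card_eq_sum (F := F) (m - 2)
  rw [ncard_M] at h1 h2
  rw [Finset.sum_range_succ'] at h1
  have hsum : (∑ j ∈ Finset.range (m / 2),
      (monicSquarefree F (m - 2 * (j + 1))).ncard * Fintype.card F ^ (j + 1)) =
      Fintype.card F ^ (m - 2) * Fintype.card F := by
    rw [show m / 2 = (m - 2) / 2 + 1 from by omega, h2, Finset.sum_mul]
    apply Finset.sum_congr rfl
    intro j _
    rw [show m - 2 * (j + 1) = m - 2 - 2 * j from by omega, pow_succ]
    ring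
  rw [hsum] at h1
  have hpow : Fintype.card F ^ (m - 2) * Fintype.card F = Fintype.card F ^ (m - 1) := by
    rw [← pow_succ, show m - 2 + 1 = m - 1 from by omega]
  rw [hpow] at h1
  simp only [Nat.mul_zero, Nat.sub_zero, pow_zero, mul_one] at h1
  omega

lemma ncard_S [Fintype F] {m : ℕ} (hm : 2 ≤ m) :
    (monicSquarefree F m).ncard = Fintype.card F ^ m - Fintype.card F ^ (m - 1) := by
  have := ncard_S_add_eq (F := F) hm
  omega

/-- Monic squarefree polynomials of degree `m` not vanishing at `a`. -/
def Tset (a : F) (m : ℕ) : Set (Polynomial F) :=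
  {f ∈ monicSquarefree F m | f.eval a ≠ 0}

lemma finite_T [Fintype F] (a : F) (m : ℕ) : (Tset a m).Finite :=
  (finite_S m).subset (fun f hf => hf.1)

lemma bijOn_mul_X_sub_C (a : F) (m : ℕ) :
    Set.BijOn (fun g => (X - C a) * g) (Tset a m)
      {f ∈ monicSquarefree F (m + 1) | f.eval a = 0} := by
  refine ⟨?_, ?_, ?_⟩
  · rintro g ⟨⟨hgm, hgs, hgd⟩, hga⟩
    refine ⟨⟨(monic_X_sub_C a).mul hgm, ?_, ?_⟩, ?_⟩
    · refine squarefree_mul_iff.mpr ⟨?_, (irreducible_X_sub_C a).squarefree, hgs⟩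
      exact (irreducible_X_sub_C a).isRelPrime_iff_not_dvd.mpr
        (fun hdvd => hga (dvd_iff_isRoot.mp hdvd))
    · rw [(monic_X_sub_C a).natDegree_mul hgm, natDegree_X_sub_C, hgd, add_comm]
    · simp
  · intro g₁ _ g₂ _ h
    exact mul_left_cancel₀ (X_sub_C_ne_zero a) h
  · rintro f ⟨⟨hfm, hfs, hfd⟩, hfa⟩
    obtain ⟨g, hg⟩ := dvd_iff_isRoot.mpr hfa
    have hgm : g.Monic := (monic_X_sub_C a).of_mul_monic_left (hg ▸ hfm)
    have hgs : Squarefree g := hfs.squarefree_of_dvd (Dvd.intro_left _ hg.symm)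
    have hgd : g.natDegree = m := by
      have := hfd
      rw [hg, (monic_X_sub_C a).natDegree_mul hgm, natDegree_X_sub_C] at this
      omega
    have hga : g.eval a ≠ 0 := by
      intro h0
      obtain ⟨k, hk⟩ := dvd_iff_isRoot.mpr h0
      have : (X - C a) * (X - C a) ∣ f := ⟨k, by rw [hg, hk]; ring⟩
      exact (irreducible_X_sub_C a).not_isUnit (hfs _ this)
    exact ⟨g, ⟨⟨hgm, hgs, hgd⟩, hga⟩, hg.symm⟩

lemma ncard_S_split [Fintype F] (a : F) (m : ℕ) :
    (monicSquarefree F (m + 1)).ncard = (Tset a (m + 1)).ncard + (Tset a m).ncard := by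
  classical
  have hsplit : monicSquarefree F (m + 1) =
      Tset a (m + 1) ∪ {f ∈ monicSquarefree F (m + 1) | f.eval a = 0} := by
    ext f
    constructor
    · intro hf
      by_cases h0 : f.eval a = 0
      · exact Or.inr ⟨hf, h0⟩
      · exact Or.inl ⟨hf, h0⟩
    · rintro (hf | hf) <;> exact hf.1
  have hdisj : Disjoint (Tset a (m + 1)) {f ∈ monicSquarefree F (m + 1) | f.eval a = 0} := by
    rw [Set.disjoint_left]
    rintro f ⟨_, hne⟩ ⟨_, h0⟩
    exact hne h0
  have hfin1 : (Tset a (m + 1)).Finite := finite_T a (m + 1)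
  have hfin2 : ({f ∈ monicSquarefree F (m + 1) | f.eval a = 0}).Finite :=
    (finite_S (m + 1)).subset fun f hf => hf.1
  rw [hsplit, Set.ncard_union_eq hdisj hfin1 hfin2]
  congr 1
  have himg := (bijOn_mul_X_sub_C a m).image_eq
  rw [← himg, Set.ncard_image_of_injOn (bijOn_mul_X_sub_C a m).injOn]

lemma ncard_T_zero (a : F) : (Tset a 0).ncard = 1 := by
  have : Tset a 0 = {1} := by
    rw [Tset, S_zero_eq]
    ext f
    constructor
    · rintro ⟨hf, _⟩; exact hf
    · rintro rfl; exact ⟨rfl, by simp⟩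
  rw [this, Set.ncard_singleton]

lemma sum_shape (q : ℚ) (m : ℕ) :
    (∑ i ∈ Finset.range m, (-1 : ℚ) ^ i * q ^ (-(i : ℤ))) =
      ∑ i ∈ Finset.range m, (-q⁻¹) ^ i := by
  refine Finset.sum_congr rfl fun i _ => ?_
  rw [zpow_neg, zpow_natCast, ← inv_pow]
  ring

lemma ncard_T [Fintype F] (a : F) {m : ℕ} (hm : 1 ≤ m) :
    ((Tset a m).ncard : ℚ) =
      ((Fintype.card F : ℚ) ^ m - (Fintype.card F : ℚ) ^ (m - 1)) *
        ∑ i ∈ Finset.range m, (-1 : ℚ) ^ i * (Fintype.card F : ℚ) ^ (-(i : ℤ)) := by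
  have hq1 : 1 ≤ Fintype.card F := Fintype.card_pos
  have hq0 : (Fintype.card F : ℚ) ≠ 0 := by positivity
  induction m, hm using Nat.le_induction with
  | base =>
    have h := ncard_S_split (F := F) a 0
    rw [ncard_S_one, ncard_T_zero] at h
    simp only [zero_add] at h
    have h' : (Tset a 1).ncard + 1 = Fintype.card F := by omega
    have hQ := congrArg (Nat.cast : ℕ → ℚ) h'
    push_cast at hQ
    simp only [Finset.sum_range_one, pow_zero, Nat.cast_zero, neg_zero, zpow_zero,
      pow_one, Nat.sub_self, one_mul, mul_one]
    linarith
  | succ m hm ih =>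
    obtain ⟨k, rfl⟩ : ∃ k, m = k + 1 := ⟨m - 1, by omega⟩
    have h := ncard_S_split (F := F) a (k + 1)
    have hs := ncard_S_add_eq (F := F) (show 2 ≤ k + 1 + 1 by omega)
    simp only [Nat.add_sub_cancel] at hs ih ⊢
    have hN : (Tset a (k + 1 + 1)).ncard + (Tset a (k + 1)).ncard +
        Fintype.card F ^ (k + 1) = Fintype.card F ^ (k + 1 + 1) := by omega
    have hQ := congrArg (Nat.cast : ℕ → ℚ) hN
    push_cast at hQ
    rw [ih] at hQ
    have hsum : (∑ i ∈ Finset.range (k + 1 + 1), (-1 : ℚ) ^ i *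
        (Fintype.card F : ℚ) ^ (-(i : ℤ))) =
        (-(Fintype.card F : ℚ)⁻¹ *
          ∑ i ∈ Finset.range (k + 1), (-1 : ℚ) ^ i * (Fintype.card F : ℚ) ^ (-(i : ℤ))) + 1 := by
      rw [sum_shape, sum_shape, geom_sum_succ]
    rw [hsum]
    linear_combination hQ + ((Fintype.card F : ℚ) ^ (k + 1) - (Fintype.card F : ℚ) ^ k) *
      (∑ i ∈ Finset.range (k + 1), (-1 : ℚ) ^ i * (Fintype.card F : ℚ) ^ (-(i : ℤ))) *
      (mul_inv_cancel₀ hq0)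


lemma dcount_one_eq (f : F[X]) :
    dcount f 1 = {a : F | f.eval a = 0}.ncard := by
  have hbij : Set.BijOn (fun a : F => X - C a) {a : F | f.eval a = 0}
      {p : F[X] | p.Monic ∧ Irreducible p ∧ p.natDegree = 1 ∧ p ∣ f} := by
    refine ⟨?_, ?_, ?_⟩
    · intro a ha
      exact ⟨monic_X_sub_C a, irreducible_X_sub_C a, natDegree_X_sub_C a,
        dvd_iff_isRoot.mpr ha⟩
    · intro a _ b _ hab
      have hC : (C a : F[X]) = C b := by
        have h1 : (X : F[X]) - C a = X - C b := hab
        have := congrArg (fun t => (X : F[X]) - t) (rfl : (0:F[X]) = 0)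
        linear_combination (norm := ring_nf) -h1
      exact C_injective hC
    · rintro p ⟨hpm, _, hpd, hpdvd⟩
      have hform : p = X - C (-(p.coeff 0)) := by
        rw [map_neg, sub_neg_eq_add]
        exact hpm.eq_X_add_C hpd
      refine ⟨-(p.coeff 0), ?_, hform.symm⟩
      show f.eval (-(p.coeff 0)) = 0
      exact dvd_iff_isRoot.mp (hform ▸ hpdvd)
  rw [dcount, ← hbij.image_eq, Set.ncard_image_of_injOn hbij.injOn]

end SFAux

/-- The total number of linear factors of monic squarefree polynomials of degree `n`
over `𝔽_q` is `(q^n − q^{n−1}) · (1 − 1/q + 1/q² − ⋯ ± 1/q^{n−2})`. -/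
theorem stmt10 (q n : ℕ) (hn : 2 ≤ n) (F : Type) [Field F] [Fintype F]
    (hq : Fintype.card F = q) :
    ((∑ᶠ f ∈ monicSquarefree F n, dcount f 1 : ℕ) : ℚ) =
      ((q : ℚ) ^ n - (q : ℚ) ^ (n - 1)) *
        ∑ i ∈ Finset.range (n - 1), (-1 : ℚ) ^ i * (q : ℚ) ^ (-(i : ℤ)) := by
  classical
  subst hq
  obtain ⟨k, rfl⟩ : ∃ k, n = k + 2 := ⟨n - 2, by omega⟩
  have hS := SFAux.finite_S (F := F) (k + 2)
  have h1 : (∑ᶠ f ∈ monicSquarefree F (k + 2), dcount f 1) =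
      ∑ f ∈ hS.toFinset, dcount f 1 := by
    conv_lhs => rw [← hS.coe_toFinset]
    exact finsum_mem_coe_finset _ _
  have h2 : ∀ f : Polynomial F, dcount f 1 = ∑ a : F, if f.eval a = 0 then 1 else 0 := by
    intro f
    rw [SFAux.dcount_one_eq, Set.ncard_eq_toFinset_card', Set.toFinset_setOf]
    exact Finset.card_filter _ _
  have h3 : ∑ f ∈ hS.toFinset, dcount f 1 =
      ∑ a : F, (hS.toFinset.filter (fun f => f.eval a = 0)).card := by
    simp_rw [h2]
    rw [Finset.sum_comm]
    exact Finset.sum_congr rfl fun a _ => (Finset.card_filter _ _).symm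
  have h4 : ∀ a : F, (hS.toFinset.filter (fun f => f.eval a = 0)).card =
      (SFAux.Tset a (k + 1)).ncard := by
    intro a
    have hbij := SFAux.bijOn_mul_X_sub_C a (k + 1)
    have hset : (↑(hS.toFinset.filter (fun f => f.eval a = 0)) : Set (Polynomial F)) =
        {f ∈ monicSquarefree F (k + 1 + 1) | f.eval a = 0} := by
      ext f
      simp [Set.Finite.mem_toFinset]
    rw [← Set.ncard_coe_finset, hset, ← hbij.image_eq,
      Set.ncard_image_of_injOn hbij.injOn]
  have h5 : ∀ a : F, ((SFAux.Tset a (k + 1)).ncard : ℚ) =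
      ((Fintype.card F : ℚ) ^ (k + 1) - (Fintype.card F : ℚ) ^ k) *
        ∑ i ∈ Finset.range (k + 1), (-1 : ℚ) ^ i * (Fintype.card F : ℚ) ^ (-(i : ℤ)) := by
    intro a
    have := SFAux.ncard_T a (m := k + 1) (by omega)
    exact this
  rw [h1, h3]
  push_cast
  calc (∑ a : F, ((hS.toFinset.filter (fun f => f.eval a = 0)).card : ℚ))
      = ∑ a : F, ((SFAux.Tset a (k + 1)).ncard : ℚ) :=
        Finset.sum_congr rfl fun a _ => by rw [h4 a]
    _ = ∑ _a : F, ((Fintype.card F : ℚ) ^ (k + 1) - (Fintype.card F : ℚ) ^ k) *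
          ∑ i ∈ Finset.range (k + 1), (-1 : ℚ) ^ i * (Fintype.card F : ℚ) ^ (-(i : ℤ)) :=
        Finset.sum_congr rfl fun a _ => h5 a
    _ = (Fintype.card F : ℚ) * (((Fintype.card F : ℚ) ^ (k + 1) - (Fintype.card F : ℚ) ^ k) *
          ∑ i ∈ Finset.range (k + 1), (-1 : ℚ) ^ i * (Fintype.card F : ℚ) ^ (-(i : ℤ))) := by
        rw [Finset.sum_const, Finset.card_univ, nsmul_eq_mul]
    _ = ((Fintype.card F : ℚ) ^ (k + 2) - (Fintype.card F : ℚ) ^ (k + 2 - 1)) *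
          ∑ i ∈ Finset.range (k + 2 - 1), (-1 : ℚ) ^ i * (Fintype.card F : ℚ) ^ (-(i : ℤ)) := by
        simp only [show k + 2 - 1 = k + 1 from rfl]
        ring
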